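/- Suppose unit vectors û⁽¹⁾,…,û⁽ᵐ⁻¹⁾ maximize ‖⟨ℬ, u⁽¹⁾⊗⋯⊗u⁽ᵐ⁻¹⁾⟩‖ over the product of unit spheres with maximal value λ > 0, and set û⁽ᵐ⁾ = ⟨ℬ, û⁽¹⁾⊗⋯⊗û⁽ᵐ⁻¹⁾⟩ / λ. Then (û⁽¹⁾,…,û⁽ᵐ⁾) is a maximizer of ⟨ℬ, ⊗_{i=1}^m u⁽ⁱ⁾⟩ over all tuples of unit vectors, with maximum value λ. Consequently, letting ẑ⁽ⁱ⁾ = x̂⁽ⁱ⁾ + √−1 ŷ⁽ⁱ⁾ where û⁽ⁱ⁾ = (x̂⁽ⁱ⁾, ŷ⁽ⁱ⁾), λ is the largest U-eigenvalue of the complex tensor 𝒜 satisfying ⟨ℬ, ⊗u⁽ⁱ⁾⟩ = Re⟨𝒜, ⊗(x⁽ⁱ⁾+√−1 y⁽ⁱ⁾)⟩, and (ẑ⁽¹⁾,…,ẑ⁽ᵐ⁾) is a corresponding U-eigenvector tuple. -/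
import Mathlib


open Finset Complex

/-- Full Hermitian contraction of two complex tensors: `⟨A,B⟩ = Σ conj(A) * B`. -/
noncomputable def tinner {m : ℕ} {n : Fin m → ℕ} (A B : (∀ i : Fin m, Fin (n i)) → ℂ) : ℂ :=
  ∑ idx : ∀ i : Fin m, Fin (n i), (starRingEnd ℂ) (A idx) * B idx

/-- The rank-one tensor `⊗ᵢ z⁽ⁱ⁾`. -/
noncomputable def otimes {m : ℕ} {n : Fin m → ℕ} (z : ∀ i : Fin m, Fin (n i) → ℂ) :
    (∀ i : Fin m, Fin (n i)) → ℂ :=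
  fun idx => ∏ i, z i (idx i)

/-- `z` is a unit vector in `ℂ^k`. -/
def IsUnitVec {k : ℕ} (z : Fin k → ℂ) : Prop := ∑ j, Complex.normSq (z j) = 1

/-- The vector `⟨A, ⊗_{i≠k} z⁽ⁱ⁾⟩ ∈ ℂ^{n_k}`: contraction of `A` against all but the k-th vector. -/
noncomputable def contraK {m : ℕ} {n : Fin m → ℕ} (A : (∀ i : Fin m, Fin (n i)) → ℂ)
    (z : ∀ i : Fin m, Fin (n i) → ℂ) (k : Fin m) (j : Fin (n k)) : ℂ :=
  ∑ idx : ∀ i : Fin m, Fin (n i),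
    if idx k = j then (starRingEnd ℂ) (A idx) * ∏ i ∈ Finset.univ.erase k, z i (idx i) else 0

/-- `(lam, z)` is a U-eigenpair of `A`: all `z⁽ⁱ⁾` are unit vectors and
`⟨A, ⊗_{i≠k} z⁽ⁱ⁾⟩ = lam (z⁽ᵏ⁾)*` for every `k`. -/
def IsUEigenpair {m : ℕ} {n : Fin m → ℕ} (A : (∀ i : Fin m, Fin (n i)) → ℂ) (lam : ℝ)
    (z : ∀ i : Fin m, Fin (n i) → ℂ) : Prop :=
  (∀ i, IsUnitVec (z i)) ∧ ∀ k : Fin m, ∀ j : Fin (n k),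
    contraK A z k j = (lam : ℂ) * (starRingEnd ℂ) (z k j)

/-- `lam` is a U-eigenvalue of `A`. -/
def IsUEigenvalue {m : ℕ} {n : Fin m → ℕ} (A : (∀ i : Fin m, Fin (n i)) → ℂ) (lam : ℝ) : Prop :=
  ∃ z, IsUEigenpair A lam z

/-- The complex vector `x + √−1 y` built from the real vector `u = (x, y) ∈ ℝ^{2k}`
(first block real part, second block imaginary part). -/
noncomputable def toC {k : ℕ} (u : Fin k ⊕ Fin k → ℝ) : Fin k → ℂ :=
  fun j => ⟨u (Sum.inl j), u (Sum.inr j)⟩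

/-- `u` is a real unit vector. -/
def IsRUnitVec {α : Type*} [Fintype α] (u : α → ℝ) : Prop := ∑ j, (u j) ^ 2 = 1

/-- The full real multilinear contraction `⟨B, ⊗ᵢ u⁽ⁱ⁾⟩ = Σ B_{j₁…j_m} ∏ u⁽ⁱ⁾_{j_i}`. -/
noncomputable def rform {m : ℕ} {N : Fin m → Type*} [∀ i, Fintype (N i)]
    (B : (∀ i : Fin m, N i) → ℝ) (u : ∀ i : Fin m, N i → ℝ) : ℝ :=
  ∑ idx : ∀ i : Fin m, N i, B idx * ∏ i, u i (idx i)

/-- The partial contraction `⟨B, u⁽¹⁾⊗⋯⊗u⁽ᵐ⁾⟩ ∈ ℝ^{2n_{m+1}}` of an order-`(m+1)` real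
tensor against the first `m` vectors. -/
noncomputable def pcontr {m : ℕ} {n : Fin (m + 1) → ℕ}
    (B : (∀ i : Fin (m + 1), Fin (n i) ⊕ Fin (n i)) → ℝ)
    (u : ∀ i : Fin m, Fin (n i.castSucc) ⊕ Fin (n i.castSucc) → ℝ)
    (j : Fin (n (Fin.last m)) ⊕ Fin (n (Fin.last m))) : ℝ :=
  ∑ idx : ∀ i : Fin (m + 1), Fin (n i) ⊕ Fin (n i),
    if idx (Fin.last m) = j then B idx * ∏ i : Fin m, u i (idx i.castSucc) else 0

section Aux

open Finset

lemma tinner_otimes_update {m : ℕ} {n : Fin m → ℕ} (A : (∀ i : Fin m, Fin (n i)) → ℂ)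
    (z : ∀ i : Fin m, Fin (n i) → ℂ) (k : Fin m) (w : Fin (n k) → ℂ) :
    tinner A (otimes (Function.update z k w)) = ∑ j, contraK A z k j * w j := by
  unfold tinner otimes contraK
  simp only [Finset.sum_mul, ite_mul, zero_mul]
  rw [Finset.sum_comm]
  refine Finset.sum_congr rfl fun idx _ => ?_
  rw [Finset.sum_ite_eq]
  simp only [Finset.mem_univ, if_true]
  rw [← Finset.mul_prod_erase Finset.univ _ (Finset.mem_univ k), Function.update_self]
  rw [Finset.prod_congr rfl
    (fun i hi => by rw [Function.update_of_ne (Finset.mem_erase.mp hi).1])]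
  ring

lemma toC_update {m : ℕ} {n : Fin m → ℕ} (u : ∀ i : Fin m, Fin (n i) ⊕ Fin (n i) → ℝ)
    (k : Fin m) (v : Fin (n k) ⊕ Fin (n k) → ℝ) :
    (fun i => toC (Function.update u k v i)) = Function.update (fun i => toC (u i)) k (toC v) := by
  funext i
  rcases eq_or_ne i k with h | h
  · subst h; simp
  · simp [Function.update_of_ne h]

lemma re_sum_toC {N : ℕ} (c : Fin N → ℂ) (v : Fin N ⊕ Fin N → ℝ) :
    (∑ j, c j * toC v j).re
      = ∑ jj, Sum.elim (fun a => (c a).re) (fun a => -((c a).im)) jj * v jj := by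
  rw [Complex.re_sum, Fintype.sum_sum_type, ← Finset.sum_add_distrib]
  refine Finset.sum_congr rfl fun j _ => ?_
  simp [toC, Complex.mul_re]
  ring

lemma isUnitVec_toC {N : ℕ} {u : Fin N ⊕ Fin N → ℝ} (h : IsRUnitVec u) : IsUnitVec (toC u) := by
  unfold IsUnitVec
  unfold IsRUnitVec at h
  rw [Fintype.sum_sum_type] at h
  rw [← h, ← Finset.sum_add_distrib]
  exact Finset.sum_congr rfl fun j _ => by simp [toC, Complex.normSq_mk]; ring

lemma eq_of_csmax {α : Type*} [Fintype α] {c w : α → ℝ} {lam : ℝ}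
    (hw : ∑ j, w j ^ 2 = 1) (hcw : ∑ j, c j * w j = lam) (hc : ∑ j, c j ^ 2 ≤ lam ^ 2) :
    ∀ j, c j = lam * w j := by
  have key : ∑ j, (c j - lam * w j) ^ 2 ≤ 0 := by
    have hexp : ∑ j, (c j - lam * w j) ^ 2
        = (∑ j, c j ^ 2) - (2 * lam) * (∑ j, c j * w j) + lam ^ 2 * (∑ j, w j ^ 2) := by
      rw [Finset.mul_sum, Finset.mul_sum, ← Finset.sum_sub_distrib, ← Finset.sum_add_distrib]
      exact Finset.sum_congr rfl fun j _ => by ring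
    rw [hexp, hcw, hw]
    nlinarith [hc]
  have hz : ∑ j, (c j - lam * w j) ^ 2 = 0 :=
    le_antisymm key (Finset.sum_nonneg fun j _ => sq_nonneg _)
  intro j
  have := (Finset.sum_eq_zero_iff_of_nonneg (fun j _ => sq_nonneg (c j - lam * w j))).mp hz
    j (Finset.mem_univ j)
  have h0 : c j - lam * w j = 0 := by
    have := sq_eq_zero_iff.mp this
    exact this
  linarith

lemma sq_sum_le_of_forall {α : Type*} [Fintype α] {c : α → ℝ} {lam : ℝ} (hlam : 0 < lam)
    (h : ∀ v : α → ℝ, (∑ j, v j ^ 2 = 1) → ∑ j, c j * v j ≤ lam) :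
    ∑ j, c j ^ 2 ≤ lam ^ 2 := by
  by_cases h0 : ∑ j, c j ^ 2 = 0
  · rw [h0]; positivity
  have hpos : 0 < ∑ j, c j ^ 2 :=
    (Finset.sum_nonneg fun j _ => sq_nonneg _).lt_of_ne (Ne.symm h0)
  set s := Real.sqrt (∑ j, c j ^ 2) with hs
  have hspos : 0 < s := Real.sqrt_pos.mpr hpos
  have hs2 : s ^ 2 = ∑ j, c j ^ 2 := Real.sq_sqrt hpos.le
  have hunit : ∑ j, (c j / s) ^ 2 = 1 := by
    simp only [div_pow]
    rw [← Finset.sum_div, ← hs2]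
    field_simp
  have hle := h (fun j => c j / s) hunit
  have hval : ∑ j, c j * (c j / s) = s := by
    have h1 : ∑ j, c j * (c j / s) = (∑ j, c j ^ 2) / s := by
      rw [Finset.sum_div]; exact Finset.sum_congr rfl fun j _ => by ring
    rw [h1, ← hs2, sq, mul_div_assoc, div_self hspos.ne', mul_one]
  rw [hval] at hle
  rw [← hs2]
  exact pow_le_pow_left₀ hspos.le hle 2

lemma rform_eq_pcontr {m : ℕ} {n : Fin (m + 1) → ℕ}
    (B : (∀ i : Fin (m + 1), Fin (n i) ⊕ Fin (n i)) → ℝ)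
    (u : ∀ i : Fin (m + 1), Fin (n i) ⊕ Fin (n i) → ℝ) :
    rform B u = ∑ j, pcontr B (fun i => u i.castSucc) j * u (Fin.last m) j := by
  unfold rform pcontr
  simp only [Finset.sum_mul, ite_mul, zero_mul]
  rw [Finset.sum_comm]
  refine Finset.sum_congr rfl fun idx _ => ?_
  rw [Finset.sum_ite_eq]
  simp only [Finset.mem_univ, if_true]
  rw [Fin.prod_univ_castSucc]
  ring

end Aux

/-- Let `B` be the real representation of the complex tensor `A`. If unit vectors
`û⁽¹⁾,…,û⁽ᵐ⁾` maximize `‖⟨B, u⁽¹⁾⊗⋯⊗u⁽ᵐ⁾⟩‖` with maximal value `lam > 0`, and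
`û⁽ᵐ⁺¹⁾ = ⟨B, û⁽¹⁾⊗⋯⊗û⁽ᵐ⁾⟩/lam`, then the full tuple maximizes `⟨B, ⊗u⁽ⁱ⁾⟩` with value
`lam`, `lam` is the largest U-eigenvalue of `A`, and the corresponding complex vectors
`ẑ⁽ⁱ⁾ = x̂⁽ⁱ⁾ + √−1 ŷ⁽ⁱ⁾` form a U-eigenvector tuple. -/
theorem partial_maximizer_largest_UEigenvalue {m : ℕ} {n : Fin (m + 1) → ℕ}
    (A : (∀ i : Fin (m + 1), Fin (n i)) → ℂ)
    (B : (∀ i : Fin (m + 1), Fin (n i) ⊕ Fin (n i)) → ℝ)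
    (hB : ∀ u : ∀ i : Fin (m + 1), Fin (n i) ⊕ Fin (n i) → ℝ,
      rform B u = (tinner A (otimes fun i => toC (u i))).re)
    (uh : ∀ i : Fin m, Fin (n i.castSucc) ⊕ Fin (n i.castSucc) → ℝ)
    (huh : ∀ i, IsRUnitVec (uh i)) (lam : ℝ) (hpos : 0 < lam)
    (hval : lam = Real.sqrt (∑ j, (pcontr B uh j) ^ 2))
    (hmax : ∀ u, (∀ i, IsRUnitVec (u i)) → Real.sqrt (∑ j, (pcontr B u j) ^ 2) ≤ lam) :
    IsRUnitVec (fun j => pcontr B uh j / lam)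
    ∧ rform B (Fin.snoc uh fun j => pcontr B uh j / lam) = lam
    ∧ (∀ w : ∀ i : Fin (m + 1), Fin (n i) ⊕ Fin (n i) → ℝ,
        (∀ i, IsRUnitVec (w i)) → rform B w ≤ lam)
    ∧ IsUEigenpair A lam (fun i => toC (Fin.snoc (α := fun i => Fin (n i) ⊕ Fin (n i) → ℝ) uh (fun j => pcontr B uh j / lam) i))
    ∧ IsGreatest {mu : ℝ | IsUEigenvalue A mu} lam := by
  have hsum_nonneg : 0 ≤ ∑ j, (pcontr B uh j) ^ 2 := Finset.sum_nonneg fun j _ => sq_nonneg _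
  have hlam2 : lam ^ 2 = ∑ j, (pcontr B uh j) ^ 2 := by rw [hval, Real.sq_sqrt hsum_nonneg]
  set vlast : Fin (n (Fin.last m)) ⊕ Fin (n (Fin.last m)) → ℝ :=
    fun j => pcontr B uh j / lam with hvlast
  -- Part 1
  have part1 : IsRUnitVec vlast := by
    unfold IsRUnitVec
    simp only [hvlast, div_pow]
    rw [← Finset.sum_div, ← hlam2]
    field_simp
  set W : ∀ i : Fin (m + 1), Fin (n i) ⊕ Fin (n i) → ℝ := Fin.snoc uh vlast with hW
  have hWcast : (fun i : Fin m => W i.castSucc) = uh := funext fun i => Fin.snoc_castSucc _ _ _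
  have hWlast : W (Fin.last m) = vlast := Fin.snoc_last _ _
  have hWunit : ∀ i, IsRUnitVec (W i) := by
    intro i
    refine Fin.lastCases ?_ ?_ i
    · rw [hWlast]; exact part1
    · intro i
      have : W i.castSucc = uh i := Fin.snoc_castSucc _ _ _
      rw [this]; exact huh i
  -- Part 2
  have part2 : rform B W = lam := by
    rw [rform_eq_pcontr, hWcast, hWlast]
    have h1 : ∑ j, pcontr B uh j * vlast j = (∑ j, (pcontr B uh j) ^ 2) / lam := by
      rw [Finset.sum_div]
      exact Finset.sum_congr rfl fun j _ => by rw [hvlast]; ring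
    rw [h1, ← hlam2, sq, mul_div_assoc, div_self hpos.ne', mul_one]
  -- Part 3
  have part3 : ∀ w : ∀ i : Fin (m + 1), Fin (n i) ⊕ Fin (n i) → ℝ,
      (∀ i, IsRUnitVec (w i)) → rform B w ≤ lam := by
    intro w hw
    rw [rform_eq_pcontr]
    set pc := pcontr B (fun i => w i.castSucc) with hpc
    have hcs := Finset.sum_mul_sq_le_sq_mul_sq Finset.univ (fun j => pc j)
      (fun j => w (Fin.last m) j)
    have hwl : ∑ j, (w (Fin.last m) j) ^ 2 = 1 := hw _
    have hp := hmax (fun i => w i.castSucc) (fun i => hw _)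
    have h0 : (0:ℝ) ≤ ∑ j, pc j ^ 2 := Finset.sum_nonneg fun j _ => sq_nonneg _
    have hple : ∑ j, pc j ^ 2 ≤ lam ^ 2 := by
      calc ∑ j, pc j ^ 2 = Real.sqrt (∑ j, pc j ^ 2) ^ 2 := (Real.sq_sqrt h0).symm
        _ ≤ lam ^ 2 := pow_le_pow_left₀ (Real.sqrt_nonneg _) hp 2
    rw [hwl, mul_one] at hcs
    nlinarith [hcs, hple, hpos]
  -- Eigenpair
  set Z : ∀ i : Fin (m + 1), Fin (n i) → ℂ := fun i => toC (W i) with hZ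
  have part4 : IsUEigenpair A lam Z := by
    refine ⟨fun i => isUnitVec_toC (hWunit i), ?_⟩
    intro k j
    set c : Fin (n k) → ℂ := contraK A Z k with hc
    set d : Fin (n k) ⊕ Fin (n k) → ℝ :=
      Sum.elim (fun a => (c a).re) (fun a => -((c a).im)) with hd
    have hlin : ∀ v, rform B (Function.update W k v) = ∑ jj, d jj * v jj := by
      intro v
      rw [hB, toC_update, ← hZ, tinner_otimes_update, re_sum_toC]
    have hcw : ∑ jj, d jj * W k jj = lam := by
      have h1 : rform B (Function.update W k (W k)) = lam := by
        rw [Function.update_eq_self]; exact part2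
      rw [hlin] at h1; exact h1
    have hd2 : ∑ jj, d jj ^ 2 ≤ lam ^ 2 := by
      refine sq_sum_le_of_forall hpos fun v hv => ?_
      rw [← hlin v]
      refine part3 _ fun i => ?_
      rcases eq_or_ne i k with h | h
      · subst h; rw [Function.update_self]; exact hv
      · rw [Function.update_of_ne h]; exact hWunit i
    have heq := eq_of_csmax (hWunit k) hcw hd2
    have h1 := heq (Sum.inl j)
    have h2 := heq (Sum.inr j)
    simp only [hd, Sum.elim_inl, Sum.elim_inr] at h1 h2
    apply Complex.ext
    · simp [Complex.mul_re, hZ, toC]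
      exact h1
    · simp only [hc] at h2
      simp [Complex.mul_im, hZ, toC]
      linarith
  refine ⟨part1, part2, part3, part4, ⟨⟨Z, part4⟩, ?_⟩⟩
  -- Upper bound on eigenvalues
  rintro mu ⟨z, hzu, hze⟩
  set u : ∀ i : Fin (m + 1), Fin (n i) ⊕ Fin (n i) → ℝ :=
    fun i => Sum.elim (fun a => (z i a).re) (fun a => (z i a).im) with hu
  have htoC : (fun i => toC (u i)) = z := by
    funext i j
    simp [toC, hu]
  have huu : ∀ i, IsRUnitVec (u i) := by
    intro i
    unfold IsRUnitVec
    rw [Fintype.sum_sum_type]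
    have h := hzu i
    unfold IsUnitVec at h
    rw [← h, ← Finset.sum_add_distrib]
    refine Finset.sum_congr rfl fun j _ => ?_
    simp [hu, Complex.normSq_apply]
    ring
  have hform : rform B u = mu := by
    rw [hB, htoC]
    have h1 : otimes z = otimes (Function.update z (Fin.last m) (z (Fin.last m))) := by
      rw [Function.update_eq_self]
    rw [h1, tinner_otimes_update]
    have h2 : ∑ j, contraK A z (Fin.last m) j * z (Fin.last m) j = (mu : ℂ) := by
      have h3 : ∀ j, contraK A z (Fin.last m) j * z (Fin.last m) j
          = (mu : ℂ) * ((Complex.normSq (z (Fin.last m) j) : ℝ) : ℂ) := by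
        intro j
        rw [hze (Fin.last m) j, Complex.normSq_eq_conj_mul_self]
        ring
      rw [Finset.sum_congr rfl fun j _ => h3 j, ← Finset.mul_sum]
      have h4 := hzu (Fin.last m)
      unfold IsUnitVec at h4
      rw [← Complex.ofReal_sum, h4]
      simp
    rw [h2]
    simp
  linarith [part3 u huu, hform.ge]
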